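/- arXiv:1709.04545 — 5 statements merged into one kernel-verified Lean document; each statement's English description precedes it below -/
import Mathlib

section
/- Every minimum spanning tree of the complete graph on a finite metric space (X,d) is contained in the relative neighborhood graph of X: if edge (a,b) belongs to some MST, then for all c ≠ a,b, d(a,b) ≤ max{d(a,c), d(b,c)}. -/
open scoped Classical

noncomputable def graphWeight {X : Type*} [Fintype X] (w : X → X → ℝ) (G : SimpleGraph X) : ℝ :=
  ∑ a : X, ∑ b : X, if G.Adj a b then w a b else 0

def IsSpanningTree {X : Type*} (G T : SimpleGraph X) : Prop :=
  T ≤ G ∧ T.IsTree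

def IsMST {X : Type*} [Fintype X] (w : X → X → ℝ) (G T : SimpleGraph X) : Prop :=
  IsSpanningTree G T ∧
    ∀ T' : SimpleGraph X, IsSpanningTree G T' → graphWeight w T ≤ graphWeight w T'

lemma reach_or_aux {X : Type*} {T : SimpleGraph X} {a b v t : X} (p : T.Walk v t)
    (ht : t = a ∨ t = b) :
    (T.deleteEdges {s(a,b)}).Reachable v a ∨ (T.deleteEdges {s(a,b)}).Reachable v b := by
  induction p with
  | nil =>
    rcases ht with rfl | rfl
    · exact Or.inl (SimpleGraph.Reachable.refl _)
    · exact Or.inr (SimpleGraph.Reachable.refl _)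
  | @cons v u _ h q ih =>
    by_cases hs : s(v, u) = s(a, b)
    · rw [Sym2.eq_iff] at hs
      rcases hs with ⟨rfl, rfl⟩ | ⟨rfl, rfl⟩
      · exact Or.inl (SimpleGraph.Reachable.refl _)
      · exact Or.inr (SimpleGraph.Reachable.refl _)
    · have hadj : (T.deleteEdges {s(a,b)}).Adj v u := by
        rw [SimpleGraph.deleteEdges_adj]
        exact ⟨h, by simpa using hs⟩
      rcases ih ht with h1 | h1
      · exact Or.inl (hadj.reachable.trans h1)
      · exact Or.inr (hadj.reachable.trans h1)

lemma pair_sum {X : Type*} [Fintype X] (w : X → X → ℝ) (u v : X) (huv : u ≠ v) :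
    (∑ x : X, ∑ y : X, if s(x,y) = s(u,v) then w x y else 0) = w u v + w v u := by
  have key : ∀ x y : X, (if s(x,y) = s(u,v) then w x y else 0)
      = (if x = u then (if y = v then w x y else 0) else 0)
        + (if x = v then (if y = u then w x y else 0) else 0) := by
    intro x y
    by_cases h : s(x,y) = s(u,v)
    · rw [Sym2.eq_iff] at h
      rcases h with ⟨rfl, rfl⟩ | ⟨rfl, rfl⟩ <;>
        simp [huv, huv.symm, Sym2.eq_iff]
    · have h' := h
      rw [Sym2.eq_iff] at h'
      push_neg at h'
      split_ifs with h1 h2 h3 h4 <;> simp_all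
  simp only [key, Finset.sum_add_distrib]
  simp

lemma swap_aux {X : Type*} [MetricSpace X] [Fintype X]
    (T : SimpleGraph X) (hT : IsMST (fun x y => dist x y) ⊤ T)
    (a b c : X) (hab : T.Adj a b) (hca : c ≠ a) (hcb : c ≠ b)
    (hreach : (T.deleteEdges {s(a,b)}).Reachable c a) :
    dist a b ≤ dist b c := by
  have hne : a ≠ b := hab.ne
  have tree := hT.1.2
  set e : Sym2 X := s(a, b) with he_def
  set f : Sym2 X := s(b, c) with hf_def
  have hef : e ≠ f := by
    intro h
    rw [he_def, hf_def, Sym2.eq_iff] at h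
    rcases h with ⟨h1, _⟩ | ⟨h1, _⟩
    · exact hne h1
    · exact hca h1.symm
  -- e is a bridge of T
  have hbridge : T.IsBridge e :=
    (SimpleGraph.isAcyclic_iff_forall_adj_isBridge.mp tree.2) hab
  have hnr : ¬ (T.deleteEdges {e}).Reachable a b := SimpleGraph.isBridge_iff.mp hbridge
  have hfT : f ∉ T.edgeSet := by
    intro hf
    apply hnr
    have hadjbc : (T.deleteEdges {e}).Adj b c := by
      rw [SimpleGraph.deleteEdges_adj]
      exact ⟨T.mem_edgeSet.mp hf, by simpa using (Ne.symm hef)⟩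
    exact (hadjbc.reachable.trans hreach).symm
  set T' : SimpleGraph X := SimpleGraph.fromEdgeSet ((T.edgeSet \ {e}) ∪ {f}) with hT'def
  have hT'adj : ∀ x y : X, T'.Adj x y ↔ ((T.Adj x y ∧ s(x,y) ≠ e) ∨ s(x,y) = f) := by
    intro x y
    rw [hT'def, SimpleGraph.fromEdgeSet_adj]
    constructor
    · rintro ⟨hm, _⟩
      rcases hm with ⟨hm, hne'⟩ | hm
      · exact Or.inl ⟨T.mem_edgeSet.mp hm, hne'⟩
      · exact Or.inr hm
    · rintro (⟨hadj, hne'⟩ | hm)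
      · exact ⟨Or.inl ⟨T.mem_edgeSet.mpr hadj, hne'⟩, hadj.ne⟩
      · refine ⟨Or.inr hm, ?_⟩
        rw [hf_def, Sym2.eq_iff] at hm
        rcases hm with ⟨rfl, rfl⟩ | ⟨rfl, rfl⟩
        · exact Ne.symm hcb
        · exact hcb
  have htd : T.deleteEdges {e} ≤ T' := by
    intro x y hxy
    rw [SimpleGraph.deleteEdges_adj] at hxy
    exact (hT'adj x y).mpr (Or.inl ⟨hxy.1, by simpa using hxy.2⟩)
  have hT'bc : T'.Adj b c := (hT'adj b c).mpr (Or.inr rfl)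
  -- T' is connected
  have hreach_a : ∀ v : X, T'.Reachable v a := by
    intro v
    obtain ⟨p⟩ := tree.1.preconnected v a
    rcases reach_or_aux (b := b) p (Or.inl rfl) with h1 | h1
    · exact h1.mono htd
    · exact (h1.mono htd).trans (hT'bc.reachable.trans (hreach.mono htd))
  have hT'conn : T'.Connected := by
    rw [SimpleGraph.connected_iff]
    exact ⟨fun u v => (hreach_a u).trans (hreach_a v).symm, ⟨a⟩⟩
  -- f is a bridge of T'
  have hT'le : T'.deleteEdges {f} ≤ T.deleteEdges {e} := by
    intro x y hxy
    rw [SimpleGraph.deleteEdges_adj] at hxy ⊢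
    obtain ⟨hxy1, hxy2⟩ := hxy
    rcases (hT'adj x y).mp hxy1 with ⟨hadj, hne'⟩ | hm
    · exact ⟨hadj, by simpa using hne'⟩
    · exact absurd hm (by simpa using hxy2)
  have hfbridge : T'.IsBridge f := by
    rw [hf_def, SimpleGraph.isBridge_iff]
    intro hr
    have hr' : (T.deleteEdges {e}).Reachable b c := hr.mono hT'le
    exact hnr (hr'.trans hreach).symm
  -- T' is acyclic
  have hT'ac : T'.IsAcyclic := by
    intro v cyc hcyc
    by_cases hm : f ∈ cyc.edges
    · have := (SimpleGraph.isBridge_iff_mem_and_forall_cycle_notMem (cyc.edges_subset_edgeSet hm)).mp hfbridge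
      exact this cyc hcyc hm
    · have hedges : ∀ g ∈ cyc.edges, g ∈ T.edgeSet := by
        intro g hg
        have hgT' := cyc.edges_subset_edgeSet hg
        rw [hT'def, SimpleGraph.edgeSet_fromEdgeSet] at hgT'
        rcases hgT'.1 with ⟨hg1, _⟩ | hg1
        · exact hg1
        · rw [Set.mem_singleton_iff] at hg1
          rw [hg1] at hg
          exact absurd hg hm
      exact tree.2 (cyc.transfer T hedges) (hcyc.transfer hedges)
  have hT'tree : T'.IsTree := ⟨hT'conn, hT'ac⟩
  -- weight comparison
  have hw := hT.2 T' ⟨le_top, hT'tree⟩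
  set w : X → X → ℝ := fun x y => dist x y with hw_def
  have key : ∀ x y : X,
      (if T'.Adj x y then w x y else 0) + (if s(x,y) = e then w x y else 0)
        = (if T.Adj x y then w x y else 0) + (if s(x,y) = f then w x y else 0) := by
    intro x y
    by_cases h1 : s(x,y) = e
    · have hTxy : T.Adj x y := T.mem_edgeSet.mp (by rw [h1]; exact T.mem_edgeSet.mpr hab)
      have hT'xy : ¬ T'.Adj x y := by
        rw [hT'adj]
        rintro (⟨_, hne'⟩ | hm)
        · exact hne' h1
        · exact hef (h1.symm.trans hm)
      simp [h1, hTxy, hT'xy, hef]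
    · by_cases h2 : s(x,y) = f
      · have hT'xy : T'.Adj x y := (hT'adj x y).mpr (Or.inr h2)
        have hTxy : ¬ T.Adj x y := fun h => hfT (h2 ▸ T.mem_edgeSet.mpr h)
        simp [h1, h2, hTxy, hT'xy, hef, Ne.symm hef]
      · have : T'.Adj x y ↔ T.Adj x y := by
          rw [hT'adj]
          simp [h1, h2]
        simp [h1, h2, this]
  have hsum : graphWeight w T' + (∑ x : X, ∑ y : X, if s(x,y) = e then w x y else 0)
      = graphWeight w T + (∑ x : X, ∑ y : X, if s(x,y) = f then w x y else 0) := by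
    unfold graphWeight
    rw [← Finset.sum_add_distrib, ← Finset.sum_add_distrib]
    refine Finset.sum_congr rfl fun x _ => ?_
    rw [← Finset.sum_add_distrib, ← Finset.sum_add_distrib]
    exact Finset.sum_congr rfl fun y _ => by convert key x y
  rw [he_def, hf_def, pair_sum w a b hne, pair_sum w b c (Ne.symm hcb)] at hsum
  have h1 : w a b = dist a b := rfl
  have h2 : w b a = dist a b := dist_comm b a
  have h3 : w b c = dist b c := rfl
  have h4 : w c b = dist b c := dist_comm c b
  rw [h1, h2, h3, h4] at hsum
  have hw' : graphWeight w T ≤ graphWeight w T' := hw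
  linarith

theorem emst_subset_rng {X : Type*} [MetricSpace X] [Fintype X]
    (T : SimpleGraph X) (hT : IsMST (fun x y => dist x y) ⊤ T)
    (a b : X) (hab : T.Adj a b) :
    ∀ c : X, c ≠ a → c ≠ b → dist a b ≤ max (dist a c) (dist b c) := by
  intro c hca hcb
  by_contra hcon
  push_neg at hcon
  have h1 := (max_lt_iff.mp hcon).1
  have h2 := (max_lt_iff.mp hcon).2
  obtain ⟨p⟩ := hT.1.2.1.preconnected c a
  rcases reach_or_aux (b := b) p (Or.inl rfl) with hr | hr
  · have := swap_aux T hT a b c hab hca hcb hr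
    linarith
  · have hr' : (T.deleteEdges {s(b,a)}).Reachable c b := by
      rwa [Sym2.eq_swap]
    have := swap_aux T hT b a c hab.symm hcb hca hr'
    rw [dist_comm b a] at this
    linarith
end

section
/- For a set of three points in the Euclidean plane at pairwise equal distance (an equilateral triangle), the β-skeleton for any β > 2 has no edges; in particular the third point lies strictly inside the β-lune of the other two. -/
/-- The β-lune of two points in the Euclidean plane: the intersection of the two
open balls of radius `(β/2) * dist a b` centered at `(β/2)a + (1-β/2)b` and
`(1-β/2)a + (β/2)b`. -/
noncomputable def betaLune (β : ℝ) (a b : EuclideanSpace ℝ (Fin 2)) :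
    Set (EuclideanSpace ℝ (Fin 2)) :=
  Metric.ball ((β / 2) • a + (1 - β / 2) • b) (β / 2 * dist a b) ∩
    Metric.ball ((1 - β / 2) • a + (β / 2) • b) (β / 2 * dist a b)

private lemma key_ball (β : ℝ) (hβ : 2 < β) (a b c : EuclideanSpace ℝ (Fin 2))
    (hab : a ≠ b) (h1 : dist a b = dist a c) (h2 : dist a b = dist b c) :
    c ∈ Metric.ball ((β / 2) • a + (1 - β / 2) • b) (β / 2 * dist a b) := by
  have hd : 0 < dist a b := dist_pos.2 hab
  set d := dist a b with hdd
  have e1 : ‖a - c‖ = d := by rw [← dist_eq_norm]; exact h1.symm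
  have e2 : ‖a - b‖ = d := (dist_eq_norm a b).symm
  have e3 : ‖b - c‖ = d := by rw [← dist_eq_norm]; exact h2.symm
  have hip : (inner ℝ (a - b) (b - c) : ℝ) = -(d^2)/2 := by
    have h := norm_add_sq_real (a - b) (b - c)
    have hac : a - b + (b - c) = a - c := by abel
    rw [hac, e1, e2, e3] at h
    linarith
  rw [Metric.mem_ball, dist_eq_norm]
  have hc : c - ((β / 2) • a + (1 - β / 2) • b) = -((β/2) • (a - b) + (b - c)) := by
    module
  rw [hc, norm_neg]
  have hsq : ‖(β/2) • (a - b) + (b - c)‖^2 = (β/2)^2 * d^2 - (β/2) * d^2 + d^2 := by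
    rw [norm_add_sq_real, norm_smul, real_inner_smul_left, hip, e2, e3,
      Real.norm_eq_abs, abs_of_pos (by linarith : (0:ℝ) < β/2)]
    ring
  have hlt : ‖(β/2) • (a - b) + (b - c)‖^2 < (β/2 * d)^2 := by
    rw [hsq]
    nlinarith [mul_pos hd hd]
  exact lt_of_pow_lt_pow_left₀ 2 (by positivity) hlt

private lemma key_ball' (β : ℝ) (hβ : 2 < β) (a b c : EuclideanSpace ℝ (Fin 2))
    (hab : a ≠ b) (h1 : dist a b = dist a c) (h2 : dist a b = dist b c) :
    c ∈ Metric.ball ((1 - β / 2) • a + (β / 2) • b) (β / 2 * dist a b) := by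
  have h := key_ball β hβ b a c hab.symm (by rw [dist_comm]; exact h2)
    (by rw [dist_comm b a]; exact h1)
  rw [dist_comm b a] at h
  · have : (β / 2) • b + (1 - β / 2) • a = (1 - β / 2) • a + (β / 2) • b := by abel
    rwa [this] at h

theorem equilateral_beta_skeleton_empty (a b c : EuclideanSpace ℝ (Fin 2))
    (hab : a ≠ b) (h1 : dist a b = dist a c) (h2 : dist a b = dist b c)
    (β : ℝ) (hβ : 2 < β) :
    c ∈ betaLune β a b ∧ b ∈ betaLune β a c ∧ a ∈ betaLune β b c := by
  have hd : 0 < dist a b := dist_pos.2 hab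
  have hac : a ≠ c := dist_pos.1 (h1 ▸ hd)
  have hbc : b ≠ c := dist_pos.1 (h2 ▸ hd)
  refine ⟨⟨key_ball β hβ a b c hab h1 h2, key_ball' β hβ a b c hab h1 h2⟩,
    ⟨?_, ?_⟩, ?_, ?_⟩
  all_goals {
    first
    | exact key_ball β hβ a c b hac h1.symm
        (by rw [dist_comm c b]; linarith)
    | exact key_ball' β hβ a c b hac h1.symm
        (by rw [dist_comm c b]; linarith)
    | exact key_ball β hβ b c a hbc
        (by rw [dist_comm b a]; linarith)
        (by rw [dist_comm c a]; linarith)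
    | exact key_ball' β hβ b c a hbc
        (by rw [dist_comm b a]; linarith)
        (by rw [dist_comm c a]; linarith) }
end

section
/- There is no β > 2 such that every finite planar point set's Euclidean minimum spanning tree is contained in its β-skeleton; the equilateral triangle is a counterexample, since its EMST has two edges but its β-skeleton is empty for β > 2. -/
open scoped Classical

section aux

local notation "E" => EuclideanSpace ℝ (Fin 2)

open scoped RealInnerProductSpace

lemma exists_equilateral : ∃ a b c : E, dist a b = 1 ∧ dist a c = 1 ∧ dist b c = 1 := by
  have h3 : Real.sqrt 3 ^ 2 = 3 := Real.sq_sqrt (by norm_num)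
  refine ⟨(WithLp.equiv 2 _).symm ![0, 0], (WithLp.equiv 2 _).symm ![1, 0],
    (WithLp.equiv 2 _).symm ![1/2, Real.sqrt 3 / 2], ?_, ?_, ?_⟩ <;>
  · rw [EuclideanSpace.dist_eq, Fin.sum_univ_two]
    simp only [WithLp.equiv_symm_apply, PiLp.toLp_apply, Matrix.cons_val_zero, Matrix.cons_val_one,
      Matrix.head_cons, Real.dist_eq, sq_abs]
    rw [show ∀ x : ℝ, x = 1 → Real.sqrt x = 1 from fun x hx => hx ▸ Real.sqrt_one]
    norm_num [div_pow, h3]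

lemma mem_ball_of_equilateral {β : ℝ} (hβ : 2 < β) {a b c : E}
    (hab : dist a b = 1) (hac : dist a c = 1) (hbc : dist b c = 1) :
    dist c ((β / 2) • a + (1 - β / 2) • b) < β / 2 * dist a b := by
  set t : ℝ := β / 2 with ht
  have ht1 : 1 < t := by rw [ht]; linarith
  have hu : ‖c - b‖ = 1 := by rw [← dist_eq_norm, dist_comm]; exact hbc
  have hv : ‖a - b‖ = 1 := by rw [← dist_eq_norm]; exact hab
  have huv : ‖(c - b) - (a - b)‖ = 1 := by
    rw [show (c - b) - (a - b) = c - a by abel, ← dist_eq_norm, dist_comm]; exact hac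
  have hinner : (inner ℝ (c - b) (a - b) : ℝ) = 1 / 2 := by
    have := norm_sub_sq_real (c - b) (a - b)
    rw [hu, hv, huv] at this
    simp only [one_pow] at this
    linarith
  have key : c - ((t) • a + (1 - t) • b) = (c - b) - t • (a - b) := by
    rw [smul_sub, sub_smul, one_smul]; abel
  have hnormsq : ‖(c - b) - t • (a - b)‖ ^ 2 = 1 - t + t ^ 2 := by
    rw [norm_sub_sq_real, real_inner_smul_right, norm_smul, hinner, hu, hv,
      Real.norm_eq_abs, abs_of_pos (by linarith)]
    ring
  have hlt : ‖(c - b) - t • (a - b)‖ ^ 2 < t ^ 2 := by rw [hnormsq]; nlinarith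
  have := lt_of_pow_lt_pow_left₀ 2 (by linarith : (0:ℝ) ≤ t) hlt
  rw [dist_eq_norm, key, hab, mul_one]
  exact this

lemma mem_lune_of_equilateral {β : ℝ} (hβ : 2 < β) {a b c : E}
    (hab : dist a b = 1) (hac : dist a c = 1) (hbc : dist b c = 1) :
    c ∈ betaLune β a b := by
  constructor
  · exact Metric.mem_ball.mpr (mem_ball_of_equilateral hβ hab hac hbc)
  · have := mem_ball_of_equilateral hβ (dist_comm a b ▸ hab) hbc hac
    rw [Metric.mem_ball, dist_comm b a] at *
    rw [show (1 - β / 2) • a + (β / 2) • b = (β / 2) • b + (1 - β / 2) • a by abel]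
    exact this

lemma weight_eq_four {S : Finset E} (hcard : Fintype.card S = 3)
    (hdist : ∀ x y : S, x ≠ y → dist (x : E) (y : E) = 1)
    {T : SimpleGraph S} (hT : T.IsTree) :
    graphWeight (fun x y : S => dist (x : E) (y : E)) T = 4 := by
  have h1 : ∀ a : S, (∑ b : S, if T.Adj a b then dist (a : E) (b : E) else 0)
      = (T.degree a : ℝ) := by
    intro a
    have : (∑ b : S, if T.Adj a b then dist (a : E) (b : E) else 0)
        = ∑ b : S, if T.Adj a b then (1 : ℝ) else 0 :=
      Finset.sum_congr rfl fun b _ => by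
        split_ifs with h
        · exact hdist a b h.ne
        · rfl
    rw [this, Finset.sum_boole, SimpleGraph.degree, SimpleGraph.neighborFinset_eq_filter]
  have h2 : graphWeight (fun x y : S => dist (x : E) (y : E)) T
      = ((∑ a : S, T.degree a : ℕ) : ℝ) := by
    rw [graphWeight, Nat.cast_sum]
    exact Finset.sum_congr rfl fun a _ => h1 a
  have h3 := SimpleGraph.sum_degrees_eq_twice_card_edges T
  have h4 := hT.card_edgeFinset
  rw [hcard] at h4
  rw [h2, h3]
  have : T.edgeFinset.card = 2 := by omega
  rw [this]; norm_num

end aux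

/-- For every β > 2 there is a finite planar point set and a Euclidean MST of it
containing an edge that is not in the β-skeleton (some other point of the set
lies in the β-lune of the edge's endpoints). -/
theorem no_beta_gt_two_contains_emst :
    ∀ β : ℝ, 2 < β →
      ∃ (S : Finset (EuclideanSpace ℝ (Fin 2))) (T : SimpleGraph S),
        IsMST (fun x y : S => dist (x : EuclideanSpace ℝ (Fin 2)) (y : EuclideanSpace ℝ (Fin 2))) ⊤ T ∧
        ∃ x y : S, T.Adj x y ∧
          ∃ z ∈ S, z ≠ (x : EuclideanSpace ℝ (Fin 2)) ∧ z ≠ (y : EuclideanSpace ℝ (Fin 2)) ∧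
            z ∈ betaLune β (x : EuclideanSpace ℝ (Fin 2)) (y : EuclideanSpace ℝ (Fin 2)) := by
  intro β hβ
  obtain ⟨a, b, c, hab, hac, hbc⟩ := exists_equilateral
  have hab' : a ≠ b := fun h => by rw [h, dist_self] at hab; norm_num at hab
  have hac' : a ≠ c := fun h => by rw [h, dist_self] at hac; norm_num at hac
  have hbc' : b ≠ c := fun h => by rw [h, dist_self] at hbc; norm_num at hbc
  set S : Finset (EuclideanSpace ℝ (Fin 2)) := {a, b, c} with hS
  have haS : a ∈ S := by simp [hS]
  have hbS : b ∈ S := by simp [hS]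
  have hcS : c ∈ S := by simp [hS]
  set va : S := ⟨a, haS⟩ with hva
  set vb : S := ⟨b, hbS⟩ with hvb
  set vc : S := ⟨c, hcS⟩ with hvc
  have hvab : va ≠ vb := fun h => hab' (congrArg Subtype.val h)
  have hvbc : vb ≠ vc := fun h => hbc' (congrArg Subtype.val h)
  have hall : ∀ v : S, v = va ∨ v = vb ∨ v = vc := by
    rintro ⟨v, hv⟩
    rw [hS] at hv
    simp only [Finset.mem_insert, Finset.mem_singleton] at hv
    rcases hv with rfl | rfl | rfl
    · exact Or.inl rfl
    · exact Or.inr (Or.inl rfl)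
    · exact Or.inr (Or.inr rfl)
  have hcard : Fintype.card S = 3 := by
    rw [Fintype.card_coe, hS,
      Finset.card_insert_of_notMem (by simp [hab', hac']),
      Finset.card_insert_of_notMem (by simp [hbc']), Finset.card_singleton]
  have hdist : ∀ x y : S, x ≠ y → dist (x : EuclideanSpace ℝ (Fin 2)) (y : EuclideanSpace ℝ (Fin 2)) = 1 := by
    intro x y hxy
    rcases hall x with rfl | rfl | rfl <;> rcases hall y with rfl | rfl | rfl <;>
      first
        | exact absurd rfl hxy
        | exact hab | exact hac | exact hbc
        | (rw [dist_comm]; first | exact hab | exact hac | exact hbc)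
  refine ⟨S, SimpleGraph.fromEdgeSet {s(va, vb), s(vb, vc)}, ?_, ?_⟩
  case _ =>
    set T : SimpleGraph S := SimpleGraph.fromEdgeSet {s(va, vb), s(vb, vc)} with hT
    have hT1 : T.Adj va vb := by
      rw [hT, SimpleGraph.fromEdgeSet_adj]
      exact ⟨by simp, hvab⟩
    have hT2 : T.Adj vb vc := by
      rw [hT, SimpleGraph.fromEdgeSet_adj]
      exact ⟨by simp, hvbc⟩
    have hconn : T.Connected := by
      rw [SimpleGraph.connected_iff]
      refine ⟨?_, ⟨va⟩⟩
      have hreach : ∀ v : S, T.Reachable va v := by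
        intro v
        rcases hall v with rfl | rfl | rfl
        · exact SimpleGraph.Reachable.refl _
        · exact hT1.reachable
        · exact hT1.reachable.trans hT2.reachable
      intro u v
      exact (hreach u).symm.trans (hreach v)
    have hedge : ∀ e ∈ T.edgeSet, e = s(va, vb) ∨ e = s(vb, vc) := by
      intro e he
      rw [hT, SimpleGraph.edgeSet_fromEdgeSet] at he
      simpa using he.1
    have hacyc : T.IsAcyclic := by
      intro v p hp
      have h3 := hp.three_le_length
      have hnodup := hp.edges_nodup
      have hsub' : p.edges.toFinset ⊆ ({s(va, vb), s(vb, vc)} : Finset (Sym2 S)) := by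
        intro e he
        rcases hedge e (p.edges_subset_edgeSet (List.mem_toFinset.mp he)) with rfl | rfl <;> simp
      have hc1 := List.toFinset_card_of_nodup hnodup
      have hc2 := Finset.card_le_card hsub'
      have hc3 : ({s(va, vb), s(vb, vc)} : Finset (Sym2 S)).card ≤ 2 :=
        (Finset.card_insert_le _ _).trans (by simp)
      have hlen : p.edges.length ≤ 2 := by omega
      rw [SimpleGraph.Walk.length_edges] at hlen
      omega
    have htree : T.IsTree := ⟨hconn, hacyc⟩
    refine ⟨⟨le_top, htree⟩, ?_⟩
    intro T' hT'
    rw [weight_eq_four hcard hdist htree, weight_eq_four hcard hdist hT'.2]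
  case _ =>
    refine ⟨va, vb, ?_, c, hcS, fun h => hac' h.symm, fun h => hbc' h.symm, ?_⟩
    · rw [SimpleGraph.fromEdgeSet_adj]
      exact ⟨by simp, hvab⟩
    · exact mem_lune_of_equilateral hβ hab hac hbc
end

section
/- Removing from the complete weighted graph on a finite metric space all edges (a,b) for which some point lies in lune(a,b) does not disconnect the graph; in fact the resulting graph (the RNG) is connected and still contains a minimum spanning tree of the complete graph. -/
open scoped Classical

/-- The relative neighborhood graph of a metric space: `a` and `b` are adjacent
iff `a ≠ b` and no point `c` lies in `lune(a,b)`, i.e. no `c ≠ a, b` satisfies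
both `dist a c < dist a b` and `dist b c < dist a b`. -/
def rngGraph (X : Type*) [MetricSpace X] : SimpleGraph X where
  Adj a b := a ≠ b ∧
    ∀ c : X, c ≠ a → c ≠ b → ¬(dist a c < dist a b ∧ dist b c < dist a b)
  symm := by
    constructor
    rintro a b ⟨hab, h⟩
    refine ⟨hab.symm, fun c hcb hca => ?_⟩
    rw [dist_comm b a]
    intro ⟨h1, h2⟩
    exact h c hca hcb ⟨h2, h1⟩
  loopless := ⟨fun a h => h.1 rfl⟩

section Aux

variable {X : Type*}

lemma reach_of_walk' {G : SimpleGraph X} {v w : X}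
    (h : (G \ SimpleGraph.fromEdgeSet {s(v,w)}).Reachable v w) :
    ∀ {x y : X}, G.Walk x y → (G \ SimpleGraph.fromEdgeSet {s(v,w)}).Reachable x y := by
  intro x y p
  induction p with
  | nil => exact SimpleGraph.Reachable.refl _
  | @cons a b c hadj q ih =>
    by_cases he : s(a, b) = s(v, w)
    · rw [Sym2.eq_iff] at he
      rcases he with ⟨rfl, rfl⟩ | ⟨rfl, rfl⟩
      · exact h.trans ih
      · exact h.symm.trans ih
    · have : (G \ SimpleGraph.fromEdgeSet {s(v,w)}).Adj a b := by
        simp only [SimpleGraph.sdiff_adj, SimpleGraph.fromEdgeSet_adj]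
        exact ⟨hadj, fun hh => he hh.1⟩
      exact this.reachable.trans ih

lemma reach_or_aux_s17 {G : SimpleGraph X} {a b : X} :
    ∀ {x y : X}, G.Walk x y →
      (G \ SimpleGraph.fromEdgeSet {s(a,b)}).Reachable x y ∨
      ((G \ SimpleGraph.fromEdgeSet {s(a,b)}).Reachable x a ∧
       (G \ SimpleGraph.fromEdgeSet {s(a,b)}).Reachable b y) ∨
      ((G \ SimpleGraph.fromEdgeSet {s(a,b)}).Reachable x b ∧
       (G \ SimpleGraph.fromEdgeSet {s(a,b)}).Reachable a y) := by
  intro x y p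
  set H := G \ SimpleGraph.fromEdgeSet {s(a,b)} with hH
  induction p with
  | nil => exact Or.inl (SimpleGraph.Reachable.refl _)
  | @cons u v w hadj q ih =>
    by_cases he : s(u, v) = s(a, b)
    · rw [Sym2.eq_iff] at he
      rcases he with ⟨rfl, rfl⟩ | ⟨rfl, rfl⟩
      · rcases ih with h | ⟨h1, h2⟩ | ⟨h1, h2⟩
        · exact Or.inr (Or.inl ⟨SimpleGraph.Reachable.refl _, h⟩)
        · exact Or.inl (h1.symm.trans h2)
        · exact Or.inl h2
      · rcases ih with h | ⟨h1, h2⟩ | ⟨h1, h2⟩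
        · exact Or.inr (Or.inr ⟨SimpleGraph.Reachable.refl _, h⟩)
        · exact Or.inl h2
        · exact Or.inl (h1.symm.trans h2)
    · have h2 : H.Adj u v := by
        rw [hH]
        simp only [SimpleGraph.sdiff_adj, SimpleGraph.fromEdgeSet_adj]
        exact ⟨hadj, fun hh => he hh.1⟩
      rcases ih with h | ⟨ha, hb⟩ | ⟨ha, hb⟩
      · exact Or.inl (h2.reachable.trans h)
      · exact Or.inr (Or.inl ⟨h2.reachable.trans ha, hb⟩)
      · exact Or.inr (Or.inr ⟨h2.reachable.trans ha, hb⟩)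

lemma reach_or {G : SimpleGraph X} {a b x : X} (p : G.Walk x a) :
      (G \ SimpleGraph.fromEdgeSet {s(a,b)}).Reachable x a ∨
      (G \ SimpleGraph.fromEdgeSet {s(a,b)}).Reachable x b := by
  rcases reach_or_aux_s17 (a := a) (b := b) p with h | ⟨h1, h2⟩ | ⟨h1, h2⟩
  · exact Or.inl h
  · exact Or.inl h1
  · exact Or.inr h1

lemma exists_tree_le [Fintype X] :
    ∀ (n : ℕ) (G : SimpleGraph X), G.edgeSet.ncard ≤ n → G.Connected →
      ∃ T, T ≤ G ∧ T.IsTree := by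
  intro n
  induction n with
  | zero =>
    intro G hcard hconn
    by_cases hac : G.IsAcyclic
    · exact ⟨G, le_refl _, ⟨hconn, hac⟩⟩
    · exfalso
      simp only [SimpleGraph.IsAcyclic, not_forall, not_not] at hac
      obtain ⟨v, c, hc⟩ := hac
      have hne : c.edges ≠ [] := by
        intro h
        have h3 := hc.three_le_length
        have h4 := SimpleGraph.Walk.length_edges c
        rw [h] at h4
        simp at h4
        omega
      obtain ⟨e, he⟩ := List.exists_mem_of_ne_nil _ hne
      have hmem : e ∈ G.edgeSet := c.edges_subset_edgeSet he
      have := Set.ncard_pos (Set.toFinite G.edgeSet) |>.mpr ⟨e, hmem⟩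
      omega
  | succ n ih =>
    intro G hcard hconn
    by_cases hac : G.IsAcyclic
    · exact ⟨G, le_refl _, ⟨hconn, hac⟩⟩
    · simp only [SimpleGraph.IsAcyclic, not_forall, not_not] at hac
      obtain ⟨v, c, hc⟩ := hac
      have hne : c.edges ≠ [] := by
        intro h
        have h3 := hc.three_le_length
        have h4 := SimpleGraph.Walk.length_edges c
        rw [h] at h4
        simp at h4
        omega
      obtain ⟨e, he⟩ := List.exists_mem_of_ne_nil _ hne
      induction e using Sym2.ind with
      | _ x y =>
        have hxy : G.Adj x y ∧ (G \ SimpleGraph.fromEdgeSet {s(x,y)}).Reachable x y :=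
          SimpleGraph.adj_and_reachable_delete_edges_iff_exists_cycle.mpr ⟨v, c, hc, he⟩
        set G' := G \ SimpleGraph.fromEdgeSet {s(x,y)} with hG'
        have hle : G' ≤ G := sdiff_le
        have hconn' : G'.Connected := by
          rw [SimpleGraph.connected_iff]
          refine ⟨fun u w => ?_, hconn.nonempty⟩
          obtain ⟨p⟩ := hconn.preconnected u w
          exact reach_of_walk' hxy.2 p
        have hedge : G'.edgeSet = G.edgeSet \ {s(x,y)} := by
          rw [hG', SimpleGraph.edgeSet_sdiff, SimpleGraph.edgeSet_fromEdgeSet,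
            SimpleGraph.edgeSet_sdiff_sdiff_isDiag]
        have hlt : G'.edgeSet.ncard < G.edgeSet.ncard := by
          rw [hedge]
          exact Set.ncard_diff_singleton_lt_of_mem (c.edges_subset_edgeSet he)
            (Set.toFinite _)
        obtain ⟨T, hT1, hT2⟩ := ih G' (by omega) hconn'
        exact ⟨T, le_trans hT1 hle, hT2⟩

lemma graphWeight_mono [Fintype X] {w : X → X → ℝ} (hw : ∀ a b, 0 ≤ w a b)
    {G H : SimpleGraph X} (h : G ≤ H) : graphWeight w G ≤ graphWeight w H := by
  unfold graphWeight
  refine Finset.sum_le_sum fun a _ => Finset.sum_le_sum fun b _ => ?_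
  by_cases hadj : G.Adj a b
  · rw [if_pos hadj, if_pos (h hadj)]
  · rw [if_neg hadj]
    by_cases hadj' : H.Adj a b
    · rw [if_pos hadj']; exact hw a b
    · rw [if_neg hadj']

lemma graphWeight_eq_sum_prod [Fintype X] (w : X → X → ℝ) (G : SimpleGraph X) :
    graphWeight w G = ∑ p : X × X, (if G.Adj p.1 p.2 then w p.1 p.2 else 0) := by
  rw [Fintype.sum_prod_type]
  rfl

/-- The key exchange step. -/
lemma exchange_lemma {X : Type*} [MetricSpace X] [Fintype X] {T : SimpleGraph X}
    (hT : T.IsTree) {a b c : X} (hab : T.Adj a b) (hca : c ≠ a) (hcb : c ≠ b)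
    (hreach : (T \ SimpleGraph.fromEdgeSet {s(a,b)}).Reachable c a)
    (hlt : dist c b < dist a b) :
    ∃ T'' : SimpleGraph X, IsSpanningTree ⊤ T'' ∧
      graphWeight (fun x y => dist x y) T'' < graphWeight (fun x y => dist x y) T := by
  set H := T \ SimpleGraph.fromEdgeSet {s(a,b)} with hH
  set T' := H ⊔ SimpleGraph.edge c b with hT'
  have hHle : H ≤ T' := le_sup_left
  have hcbadj : T'.Adj c b := Or.inr (by rw [SimpleGraph.edge_adj]; exact ⟨Or.inl ⟨rfl, rfl⟩, hcb⟩)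
  -- T' is connected
  have hconn' : T'.Connected := by
    rw [SimpleGraph.connected_iff]
    refine ⟨fun u v => ?_, hT.isConnected.nonempty⟩
    have key : ∀ z : X, T'.Reachable z b := by
      intro z
      obtain ⟨p⟩ := hT.isConnected.preconnected z a
      rcases reach_or (b := b) p with h | h
      · exact ((h.mono hHle).trans ((hreach.symm.mono hHle))).trans hcbadj.reachable
      · exact h.mono hHle
    exact (key u).trans (key v).symm
  -- the weight of T' is strictly smaller
  have hwlt : graphWeight (fun x y => dist x y) T' < graphWeight (fun x y => dist x y) T := by
    have hne : a ≠ b := hab.ne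
    set f : SimpleGraph X → X × X → ℝ :=
      fun G p => if G.Adj p.1 p.2 then dist p.1 p.2 else 0 with hf
    set S : Finset (X × X) := {(a,b), (b,a), (c,b), (b,c)} with hS
    have hmemS : ∀ p : X × X, p ∈ S ↔ p = (a,b) ∨ p = (b,a) ∨ p = (c,b) ∨ p = (b,c) := by
      intro p; simp [hS]
    have hsplit : ∀ G : SimpleGraph X,
        graphWeight (fun x y => dist x y) G = ∑ p ∈ S, f G p + ∑ p ∈ Finset.univ \ S, f G p := by
      intro G
      rw [graphWeight_eq_sum_prod]
      rw [← Finset.sum_sdiff (Finset.subset_univ S)]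
      ring
    -- comparison outside S
    have hout : ∑ p ∈ Finset.univ \ S, f T' p ≤ ∑ p ∈ Finset.univ \ S, f T p := by
      refine Finset.sum_le_sum fun p hp => ?_
      rw [Finset.mem_sdiff] at hp
      by_cases hadj : T'.Adj p.1 p.2
      · have hTadj : T.Adj p.1 p.2 := by
          rcases hadj with h | h
          · exact h.1
          · exfalso
            rw [SimpleGraph.edge_adj] at h
            rcases h.1 with ⟨h1, h2⟩ | ⟨h1, h2⟩
            · exact hp.2 (by rw [hmemS]; right; right; left
                             exact Prod.ext h1 h2)
            · exact hp.2 (by rw [hmemS]; right; right; right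
                             exact Prod.ext h1 h2)
        rw [hf]; simp only
        rw [if_pos hadj, if_pos hTadj]
      · rw [hf]; simp only
        rw [if_neg hadj]
        by_cases hTadj : T.Adj p.1 p.2
        · rw [if_pos hTadj]; exact dist_nonneg
        · rw [if_neg hTadj]
    -- explicit sums over S
    have hdistinct1 : ((a,b) : X × X) ∉ ({(b,a), (c,b), (b,c)} : Finset (X × X)) := by
      simp only [Finset.mem_insert, Finset.mem_singleton, Prod.ext_iff]
      push_neg
      aesop
    have hdistinct2 : ((b,a) : X × X) ∉ ({(c,b), (b,c)} : Finset (X × X)) := by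
      simp only [Finset.mem_insert, Finset.mem_singleton, Prod.ext_iff]
      push_neg
      aesop
    have hdistinct3 : ((c,b) : X × X) ∉ ({(b,c)} : Finset (X × X)) := by
      simp only [Finset.mem_singleton, Prod.ext_iff]
      push_neg
      aesop
    have hsumS : ∀ G : SimpleGraph X, ∑ p ∈ S, f G p
        = f G (a,b) + (f G (b,a) + (f G (c,b) + f G (b,c))) := by
      intro G
      rw [hS]
      rw [show ({(a,b), (b,a), (c,b), (b,c)} : Finset (X × X))
        = insert (a,b) (insert (b,a) (insert (c,b) {(b,c)})) from rfl]
      rw [Finset.sum_insert hdistinct1, Finset.sum_insert hdistinct2,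
        Finset.sum_insert hdistinct3, Finset.sum_singleton]
    -- adjacency facts
    have hT'ab : ¬ T'.Adj a b := by
      intro h
      rcases h with h | h
      · exact h.2 ⟨rfl, hne⟩
      · rw [SimpleGraph.edge_adj] at h
        rcases h.1 with ⟨h1, _⟩ | ⟨h1, h2⟩
        · exact hca h1.symm
        · exact hne h1
    have hT'ba : ¬ T'.Adj b a := fun h => hT'ab h.symm
    have hT'bc : T'.Adj b c := hcbadj.symm
    have hsum' : ∑ p ∈ S, f T' p = dist c b + dist b c := by
      rw [hsumS]
      rw [hf]; simp only
      rw [if_neg hT'ab, if_neg hT'ba, if_pos hcbadj, if_pos hT'bc]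
      ring
    have hsumT : dist a b + dist b a ≤ ∑ p ∈ S, f T p := by
      rw [hsumS]
      rw [hf]; simp only
      rw [if_pos hab, if_pos hab.symm]
      have h1 : (0:ℝ) ≤ if T.Adj c b then dist c b else 0 := by
        split <;> [exact dist_nonneg; rfl]
      have h2 : (0:ℝ) ≤ if T.Adj b c then dist b c else 0 := by
        split <;> [exact dist_nonneg; rfl]
      linarith
    have hstrict : ∑ p ∈ S, f T' p < ∑ p ∈ S, f T p := by
      rw [hsum']
      have : dist c b + dist b c < dist a b + dist b a := by
        rw [dist_comm b c, dist_comm b a]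
        linarith
      linarith
    rw [hsplit T', hsplit T]
    linarith
  -- extract a spanning tree of T'
  obtain ⟨T'', hT''le, hT''tree⟩ := exists_tree_le T'.edgeSet.ncard T' (le_refl _) hconn'
  refine ⟨T'', ⟨le_top, hT''tree⟩, ?_⟩
  calc graphWeight (fun x y => dist x y) T''
      ≤ graphWeight (fun x y => dist x y) T' :=
        graphWeight_mono (fun _ _ => dist_nonneg) hT''le
    _ < graphWeight (fun x y => dist x y) T := hwlt

end Aux

theorem rng_connected_and_contains_mst
    {X : Type*} [MetricSpace X] [Fintype X] [Nontrivial X] :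
    (rngGraph X).Connected ∧
      ∃ T : SimpleGraph X, IsMST (fun x y => dist x y) ⊤ T ∧ T ≤ rngGraph X := by
  -- a minimum spanning tree exists
  have hnonempty : Nonempty X := inferInstance
  obtain ⟨T₀, hT₀le, hT₀tree⟩ :=
    exists_tree_le (⊤ : SimpleGraph X).edgeSet.ncard ⊤ (le_refl _)
      (SimpleGraph.connected_top)
  set S : Finset (SimpleGraph X) :=
    Finset.univ.filter (fun T => IsSpanningTree ⊤ T) with hS
  have hSne : S.Nonempty := ⟨T₀, by simp [hS, IsSpanningTree, hT₀le, hT₀tree]⟩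
  obtain ⟨T, hTS, hTmin⟩ :=
    Finset.exists_min_image S (graphWeight (fun x y : X => dist x y)) hSne
  rw [hS, Finset.mem_filter] at hTS
  have hTst : IsSpanningTree ⊤ T := hTS.2
  have hmin : ∀ T' : SimpleGraph X, IsSpanningTree ⊤ T' →
      graphWeight (fun x y : X => dist x y) T ≤ graphWeight (fun x y : X => dist x y) T' := by
    intro T' hT'
    exact hTmin T' (by rw [hS, Finset.mem_filter]; exact ⟨Finset.mem_univ _, hT'⟩)
  have hMST : IsMST (fun x y : X => dist x y) ⊤ T := ⟨hTst, hmin⟩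
  -- T is contained in the RNG
  have hle : T ≤ rngGraph X := by
    intro x y hxy
    refine ⟨hxy.ne, fun c hcx hcy ⟨h1, h2⟩ => ?_⟩
    obtain ⟨p⟩ := hTst.2.isConnected.preconnected c x
    rcases reach_or (b := y) p with h | h
    · obtain ⟨T'', hT''st, hT''lt⟩ :=
        exchange_lemma hTst.2 hxy hcx hcy h (by rw [dist_comm]; exact h2)
      exact absurd (hmin T'' hT''st) (not_le.mpr hT''lt)
    · have h' : (T \ SimpleGraph.fromEdgeSet {s(y,x)}).Reachable c y := by
        rw [Sym2.eq_swap (a := y) (b := x)]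
        exact h
      obtain ⟨T'', hT''st, hT''lt⟩ :=
        exchange_lemma hTst.2 hxy.symm hcy hcx h'
          (by rw [dist_comm c x, dist_comm y x]; exact h1)
      exact absurd (hmin T'' hT''st) (not_le.mpr hT''lt)
  exact ⟨(hTst.2.isConnected).mono hle, T, hMST, hle⟩
end

section
/- If G' is a subgraph of a finite connected weighted graph G that contains some minimum spanning tree of G, then every minimum spanning tree of G' is a minimum spanning tree of G; hence computing an MST on the RNG (with mutual reachability weights) yields a valid MST of the full mutual reachability graph. -/
open scoped Classical

theorem mst_of_subgraph_containing_mst {X : Type*} [Fintype X]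
    (w : X → X → ℝ) (G G' : SimpleGraph X) (hG : G.Connected) (hsub : G' ≤ G)
    (T : SimpleGraph X) (hT : IsMST w G T) (hTG' : T ≤ G') :
    ∀ T' : SimpleGraph X, IsMST w G' T' → IsMST w G T' := by
  intro T' hT'
  refine ⟨⟨hT'.1.1.trans hsub, hT'.1.2⟩, ?_⟩
  intro S hS
  have h1 : graphWeight w T' ≤ graphWeight w T := hT'.2 T ⟨hTG', hT.1.2⟩
  exact h1.trans (hT.2 S hS)
end
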